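/- arXiv:1307.4718 — 2 statements merged into one kernel-verified Lean document; each statement's English description precedes it below -/
import Mathlib

section
/- Let μ be a probability measure on Γ(ℝⁿ) whose correlation functions satisfy the Ruelle bound ‖k_m‖_∞ ≤ ζ^m for all m ∈ ℕ and some ζ > 0. Then for every f ∈ C₀(ℝⁿ) (continuous with compact support) and every m ∈ ℕ, ∫_{Γ(ℝⁿ)} |⟨f,γ⟩|^m dμ(γ) < ∞, where ⟨f,γ⟩ := Σ_{x∈γ} f(x). -/
open MeasureTheory ENNReal

/-!
If `|f| ≤ C` and `f` vanishes off the compact set `K`, then `|⟨f, γ⟩| ≤ C N` with `N = #(γ ∩ K)`,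
and `N ^ m ≤ (2m) ^ m + 2 ^ m N (N - 1) ⋯ (N - m + 1)`. The falling factorial counts the ordered
`m`-tuples of distinct points of `γ ∩ K`, so its expectation is `∫_{K^m} k_m ≤ ζ ^ m |K| ^ m` by the
defining property of the correlation function and the Ruelle bound.
-/

/-- The space of locally finite configurations in `ℝⁿ`. -/
def Config (n : ℕ) : Type :=
  {γ : Set (EuclideanSpace ℝ (Fin n)) //
    ∀ K : Set (EuclideanSpace ℝ (Fin n)), IsCompact K → (γ ∩ K).Finite}

open Set Function

theorem Nat.pow_le_two_mul_pow_add_two_pow_mul_descFactorial (N m : ℕ) :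
    N ^ m ≤ (2 * m) ^ m + 2 ^ m * N.descFactorial m := by
  rcases le_or_gt N (2 * m) with h | h
  · exact (Nat.pow_le_pow_left h m).trans (Nat.le_add_right _ _)
  · calc N ^ m ≤ (2 * (N + 1 - m)) ^ m := Nat.pow_le_pow_left (by omega) m
      _ = 2 ^ m * (N + 1 - m) ^ m := Nat.mul_pow ..
      _ ≤ 2 ^ m * N.descFactorial m := Nat.mul_le_mul_left _ (N.pow_sub_le_descFactorial m)
      _ ≤ _ := Nat.le_add_left _ _

theorem Set.indicator_one_univ_pi_comp_perm {ι α β : Type*} [Zero β] [One β] (K : Set α)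
    (σ : Equiv.Perm ι) (t : ι → α) :
    (univ.pi fun _ => K).indicator (1 : (ι → α) → β) (t ∘ σ) =
      (univ.pi fun _ => K).indicator 1 t := by
  have hmem : t ∘ σ ∈ univ.pi (fun _ => K) ↔ t ∈ univ.pi (fun _ => K) := by
    simp only [mem_univ_pi, comp_apply]
    exact σ.forall_congr_right (q := fun i => t i ∈ K)
  by_cases ht : t ∈ univ.pi (fun _ => K)
  · rw [indicator_of_mem ht, indicator_of_mem (hmem.2 ht), Pi.one_apply, Pi.one_apply]
  · rw [indicator_of_notMem ht, indicator_of_notMem (mt hmem.1 ht)]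

noncomputable def injTupleSum {α : Type*} (s : Set α) (m : ℕ) (g : (Fin m → α) → ℝ≥0∞) : ℝ≥0∞ :=
  ∑' t : {t : Fin m → α // Injective t ∧ ∀ i, t i ∈ s}, g t.1

theorem abs_tsum_subtype_le_mul_ncard {α : Type*} {s K : Set α} {f : α → ℝ} {C : ℝ}
    (hfin : (s ∩ K).Finite) (hfK : support f ⊆ K) (hC : ∀ x, |f x| ≤ C) :
    |∑' x : s, f x| ≤ C * (s ∩ K).ncard := by
  have hsum : ∑' x : s, f x = ∑ x ∈ hfin.toFinset, f x := by
    rw [tsum_subtype, tsum_eq_sum fun x hx => ?_]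
    · exact Finset.sum_congr rfl fun x hx => indicator_of_mem (hfin.mem_toFinset.1 hx).1 _
    · by_contra hne
      replace hne : x ∈ s ∩ support f := by rw [← support_indicator]; exact hne
      exact hx (hfin.mem_toFinset.2 ⟨hne.1, hfK hne.2⟩)
  calc |∑' x : s, f x| ≤ ∑ x ∈ hfin.toFinset, |f x| := hsum ▸ Finset.abs_sum_le_sum_abs _ _
    _ ≤ hfin.toFinset.card • C := Finset.sum_le_card_nsmul _ _ _ fun x _ => hC x
    _ = C * (s ∩ K).ncard := by rw [nsmul_eq_mul, mul_comm, ncard_eq_toFinset_card _ hfin]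

theorem descFactorial_ncard_inter_le_injTupleSum {α : Type*} {s K : Set α}
    (hfin : (s ∩ K).Finite) (m : ℕ) :
    ((s ∩ K).ncard.descFactorial m : ℝ≥0∞) ≤
      injTupleSum s m ((univ.pi fun _ => K).indicator 1) := by
  have := hfin.fintype
  let ι : (Fin m ↪ ↥(s ∩ K)) → {t : Fin m → α // Injective t ∧ ∀ i, t i ∈ s} :=
    fun e => ⟨fun i => e i, Subtype.val_injective.comp e.injective, fun i => (e i).2.1⟩
  have hι : Injective ι := fun e₁ e₂ h =>
    Function.Embedding.ext fun i => Subtype.val_injective (congrFun (congrArg Subtype.val h) i)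
  calc ((s ∩ K).ncard.descFactorial m : ℝ≥0∞)
      = Fintype.card (Fin m ↪ ↥(s ∩ K)) := by
        rw [Fintype.card_embedding_eq, Fintype.card_fin, ← Nat.card_eq_fintype_card,
          Nat.card_coe_set_eq]
    _ = ∑ e : Fin m ↪ ↥(s ∩ K), (univ.pi fun _ => K).indicator 1 (ι e).1 := by
        simp only [indicator_of_mem (show (ι _).1 ∈ univ.pi fun _ => K from
          fun i _ => (_ : ↥(s ∩ K)).2.2), Pi.one_apply, Finset.sum_const, Finset.card_univ,
          nsmul_one]
    _ ≤ ∑' e : Fin m ↪ ↥(s ∩ K), (univ.pi fun _ => K).indicator 1 (ι e).1 :=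
        ENNReal.sum_le_tsum _
    _ ≤ _ := ENNReal.tsum_comp_le_tsum_of_injective hι _

theorem ofReal_abs_tsum_pow_le {α : Type*} {s K : Set α} {f : α → ℝ} {C : ℝ}
    (hfin : (s ∩ K).Finite) (hfK : support f ⊆ K) (hC : ∀ x, |f x| ≤ C) (hC0 : 0 ≤ C)
    (m : ℕ) :
    ENNReal.ofReal (|∑' x : s, f x| ^ m) ≤
      ENNReal.ofReal (C ^ m) *
        ((2 * m) ^ m + 2 ^ m * injTupleSum s m ((univ.pi fun _ => K).indicator 1)) := by
  set N := (s ∩ K).ncard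
  calc ENNReal.ofReal (|∑' x : s, f x| ^ m) ≤ ENNReal.ofReal ((C * N) ^ m) :=
        ENNReal.ofReal_le_ofReal <|
          pow_le_pow_left₀ (abs_nonneg _) (abs_tsum_subtype_le_mul_ncard hfin hfK hC) m
    _ = ENNReal.ofReal (C ^ m) * (N ^ m : ℕ) := by
        rw [mul_pow, ENNReal.ofReal_mul (pow_nonneg hC0 m), ← Nat.cast_pow,
          ENNReal.ofReal_natCast]
    _ ≤ ENNReal.ofReal (C ^ m) * ((2 * m) ^ m + 2 ^ m * (N.descFactorial m : ℝ≥0∞)) := by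
        gcongr
        exact_mod_cast N.pow_le_two_mul_pow_add_two_pow_mul_descFactorial m
    _ ≤ _ := by
        gcongr
        exact descFactorial_ncard_inter_le_injTupleSum hfin m

theorem lintegral_indicator_one_univ_pi_mul_le {α : Type*} [MeasureSpace α]
    [SigmaFinite (volume : Measure α)] {K : Set α} (hK : MeasurableSet K) {m : ℕ}
    {k : (Fin m → α) → ℝ≥0∞} {c : ℝ≥0∞} (hk : ∀ᵐ t, k t ≤ c) :
    ∫⁻ t, (univ.pi fun _ => K).indicator 1 t * k t ≤ c * volume K ^ m :=
  calc ∫⁻ t, (univ.pi fun _ => K).indicator 1 t * k t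
      ≤ ∫⁻ t, c * (univ.pi fun _ => K).indicator 1 t :=
        lintegral_mono_ae <| hk.mono fun t ht => by rw [mul_comm]; gcongr
    _ = c * volume K ^ m := by
        have hKm : MeasurableSet (univ.pi fun _ : Fin m => K) := .univ_pi fun _ => hK
        rw [lintegral_const_mul _ (measurable_one.indicator hKm), lintegral_indicator_one hKm, volume_pi_pi, Finset.prod_const,
          Finset.card_univ, Fintype.card_fin]

theorem stmt6_general {n : ℕ} [MeasurableSpace (Config n)]
    (μ : Measure (Config n)) [IsProbabilityMeasure μ]
    (k : (m : ℕ) → (Fin m → EuclideanSpace ℝ (Fin n)) → ℝ≥0∞)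
    (ζ : ℝ)
    (hkbdd : ∀ m, 1 ≤ m → ∀ᵐ t : Fin m → EuclideanSpace ℝ (Fin n),
      k m t ≤ ENNReal.ofReal (ζ ^ m))
    (hcorr : ∀ m, 1 ≤ m →
      ∀ g : (Fin m → EuclideanSpace ℝ (Fin n)) → ℝ≥0∞, Measurable g →
      (∀ (pp : Equiv.Perm (Fin m)) t, g (t ∘ pp) = g t) →
      ∫⁻ γ : Config n,
          (∑' t : {t : Fin m → EuclideanSpace ℝ (Fin n) //
              Function.Injective t ∧ ∀ i, t i ∈ γ.1}, g t.1) ∂μ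
        = ∫⁻ t : Fin m → EuclideanSpace ℝ (Fin n), g t * k m t) :
    ∀ f : EuclideanSpace ℝ (Fin n) → ℝ, Continuous f → HasCompactSupport f →
    ∀ m : ℕ,
      ∫⁻ γ : Config n, ENNReal.ofReal (|∑' x : γ.1, f x| ^ m) ∂μ < ⊤ := by
  intro f hf hfK m
  rcases m.eq_zero_or_pos with rfl | hm
  · simp
  obtain ⟨C, hC⟩ := hfK.exists_bound_of_continuous hf
  set K := tsupport f
  set g : (Fin m → EuclideanSpace ℝ (Fin n)) → ℝ≥0∞ := (univ.pi fun _ => K).indicator 1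
  have hKm : MeasurableSet K := (isClosed_tsupport f).measurableSet
  have hg : Measurable g := measurable_one.indicator (.univ_pi fun _ => hKm)
  have hmoment : ∫⁻ γ, injTupleSum γ.1 m g ∂μ ≤ ENNReal.ofReal (ζ ^ m) * volume K ^ m :=
    (hcorr m hm g hg (indicator_one_univ_pi_comp_perm K)).trans_le
      (lintegral_indicator_one_univ_pi_mul_le hKm (hkbdd m hm))
  have hbound (γ : Config n) : ENNReal.ofReal (|∑' x : γ.1, f x| ^ m) ≤
      ENNReal.ofReal (max C 0 ^ m) * ((2 * m) ^ m + 2 ^ m * injTupleSum γ.1 m g) :=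
    ofReal_abs_tsum_pow_le (γ.2 K hfK) (subset_tsupport f) (fun x => (hC x).trans (le_max_left _ _))
      (le_max_right _ _) m
  refine (lintegral_mono hbound).trans_lt ?_
  rw [lintegral_const_mul' _ _ ofReal_ne_top, lintegral_add_left measurable_const,
    lintegral_const, lintegral_const_mul' _ _ (by simp)]
  have hK : volume K < ⊤ := hfK.measure_lt_top
  have := hmoment.trans_lt (by finiteness)
  finiteness

theorem stmt6 {n : ℕ} [MeasurableSpace (Config n)]
    (μ : Measure (Config n)) [IsProbabilityMeasure μ]
    (k : (m : ℕ) → (Fin m → EuclideanSpace ℝ (Fin n)) → ℝ≥0∞)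
    (ζ : ℝ) (hζ : 0 < ζ)
    (hkbdd : ∀ m, 1 ≤ m → ∀ᵐ t : Fin m → EuclideanSpace ℝ (Fin n),
      k m t ≤ ENNReal.ofReal (ζ ^ m))
    (hcorr : ∀ m, 1 ≤ m →
      ∀ g : (Fin m → EuclideanSpace ℝ (Fin n)) → ℝ≥0∞, Measurable g →
      (∀ (pp : Equiv.Perm (Fin m)) t, g (t ∘ pp) = g t) →
      ∫⁻ γ : Config n,
          (∑' t : {t : Fin m → EuclideanSpace ℝ (Fin n) //
              Function.Injective t ∧ ∀ i, t i ∈ γ.1}, g t.1) ∂μ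
        = ∫⁻ t : Fin m → EuclideanSpace ℝ (Fin n), g t * k m t) :
    ∀ f : EuclideanSpace ℝ (Fin n) → ℝ, Continuous f → HasCompactSupport f →
    ∀ m : ℕ,
      ∫⁻ γ : Config n, ENNReal.ofReal (|∑' x : γ.1, f x| ^ m) ∂μ < ⊤ :=
  stmt6_general μ k ζ hkbdd hcorr
end

section
/- Let (μ_n)_{n∈ℕ} be a sequence of finitely additive set functions on an algebra A₀ of subsets of a set Ω, with values in [0,1] and μ_n(Ω) = 1, which converges pointwise on A₀ to a set function μ. Suppose the family is locally equicontinuous in the sense that for every decreasing sequence B_k ↓ ∅ in A₀, lim_{k→∞} limsup_n μ_n(B_k) = 0. Then μ is finitely additive on A₀ and σ-additive in the sense that μ(B_k) → 0 for every decreasing sequence B_k ↓ ∅ in A₀; hence μ extends uniquely to a probability measure on σ(A₀). -/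
/-!
Finite additivity, the normalisation and the continuity at `∅` all pass to the pointwise limit:
the last one because `limsup_n μ_n(B_k)` is just `μ(B_k)` once `μ_n(B_k)` converges. On a ring
of sets, a finite-valued additive content continuous at `∅` is σ-additive, hence σ-subadditive,
and the Carathéodory construction extends it to a measure; a finite measure is determined by its
values on a generating algebra.
-/

open Filter MeasureTheory Topology
open scoped ENNReal

namespace MeasureTheory

variable {α : Type*} {C : Set (Set α)}

theorem AddContent.isSigmaSubadditive_of_tendsto_zero (hC : IsSetRing C)
    (m : AddContent ℝ≥0∞ C) (hm_ne_top : ∀ s ∈ C, m s ≠ ∞)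
    (hm_tendsto : ∀ ⦃s : ℕ → Set α⦄ (_ : ∀ n, s n ∈ C),
      Antitone s → (⋂ n, s n) = ∅ → Tendsto (fun n ↦ m (s n)) atTop (𝓝 0)) :
    m.IsSigmaSubadditive :=
  isSigmaSubadditive_of_addContent_iUnion_eq_tsum hC fun _ hf hUf hdisj ↦
    addContent_iUnion_eq_sum_of_tendsto_zero hC m hm_ne_top hm_tendsto hf hUf hdisj

section OfReal

variable {μ : Set α → ℝ}

theorem IsSetRing.apply_empty_of_union (hC : IsSetRing C)
    (hμ_add : ∀ s ∈ C, ∀ t ∈ C, Disjoint s t → μ (s ∪ t) = μ s + μ t) : μ ∅ = 0 := by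
  have h := hμ_add ∅ hC.empty_mem ∅ hC.empty_mem (Set.disjoint_empty _)
  rw [Set.union_empty] at h
  linarith

variable (μ) in
noncomputable def IsSetRing.addContentOfReal (hC : IsSetRing C)
    (hμ_nonneg : ∀ s ∈ C, 0 ≤ μ s)
    (hμ_add : ∀ s ∈ C, ∀ t ∈ C, Disjoint s t → μ (s ∪ t) = μ s + μ t) :
    AddContent ℝ≥0∞ C :=
  hC.addContent_of_union (fun s ↦ ENNReal.ofReal (μ s))
    (by rw [hC.apply_empty_of_union hμ_add, ENNReal.ofReal_zero])
    fun hs ht hst ↦ by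
      rw [hμ_add _ hs _ ht hst, ENNReal.ofReal_add (hμ_nonneg _ hs) (hμ_nonneg _ ht)]

theorem IsSetRing.addContentOfReal_apply (hC : IsSetRing C) (hμ_nonneg : ∀ s ∈ C, 0 ≤ μ s)
    (hμ_add : ∀ s ∈ C, ∀ t ∈ C, Disjoint s t → μ (s ∪ t) = μ s + μ t) (s : Set α) :
    hC.addContentOfReal μ hμ_nonneg hμ_add s = ENNReal.ofReal (μ s) :=
  rfl

theorem IsSetRing.exists_measure_eq_ofReal [mα : MeasurableSpace α] (hC : IsSetRing C)
    (hgen : mα = MeasurableSpace.generateFrom C) (hμ_nonneg : ∀ s ∈ C, 0 ≤ μ s)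
    (hμ_add : ∀ s ∈ C, ∀ t ∈ C, Disjoint s t → μ (s ∪ t) = μ s + μ t)
    (hμ_tendsto : ∀ s : ℕ → Set α, (∀ n, s n ∈ C) → Antitone s → (⋂ n, s n) = ∅ →
      Tendsto (fun n ↦ μ (s n)) atTop (𝓝 0)) :
    ∃ ν : Measure α, ∀ s ∈ C, ν s = ENNReal.ofReal (μ s) := by
  set m := hC.addContentOfReal μ hμ_nonneg hμ_add
  have hm : ∀ s, m s = ENNReal.ofReal (μ s) := hC.addContentOfReal_apply hμ_nonneg hμ_add
  have hm_sigma : m.IsSigmaSubadditive :=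
    m.isSigmaSubadditive_of_tendsto_zero hC (fun s _ ↦ hm s ▸ ENNReal.ofReal_ne_top)
      fun s hs hanti hempty ↦ by
        simpa [hm] using ENNReal.tendsto_ofReal (hμ_tendsto s hs hanti hempty)
  exact ⟨m.measure hC.isSetSemiring hgen.le hm_sigma,
    fun s hs ↦ (m.measure_eq hC.isSetSemiring hgen hm_sigma hs).trans (hm s)⟩

end OfReal

end MeasureTheory

theorem stmt17 {Ω : Type*} (A₀ : Set (Set Ω))
    (huniv : Set.univ ∈ A₀)
    (hcompl : ∀ B ∈ A₀, Bᶜ ∈ A₀)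
    (hunion : ∀ B ∈ A₀, ∀ C ∈ A₀, B ∪ C ∈ A₀)
    (μn : ℕ → Set Ω → ℝ) (μ : Set Ω → ℝ)
    (hrange : ∀ i, ∀ B ∈ A₀, 0 ≤ μn i B ∧ μn i B ≤ 1)
    (htotal : ∀ i, μn i Set.univ = 1)
    (hadd : ∀ i, ∀ B ∈ A₀, ∀ C ∈ A₀, Disjoint B C → μn i (B ∪ C) = μn i B + μn i C)
    (hconv : ∀ B ∈ A₀, Tendsto (fun i => μn i B) atTop (nhds (μ B)))
    (hLEC : ∀ B : ℕ → Set Ω, (∀ k, B k ∈ A₀) → Antitone B → (⋂ k, B k) = ∅ →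
      Tendsto (fun k => limsup (fun i => μn i (B k)) atTop) atTop (nhds 0)) :
    (∀ B ∈ A₀, ∀ C ∈ A₀, Disjoint B C → μ (B ∪ C) = μ B + μ C) ∧
    (∀ B : ℕ → Set Ω, (∀ k, B k ∈ A₀) → Antitone B → (⋂ k, B k) = ∅ →
      Tendsto (fun k => μ (B k)) atTop (nhds 0)) ∧
    (∃! ν : @Measure Ω (MeasurableSpace.generateFrom A₀),
      @IsProbabilityMeasure Ω (MeasurableSpace.generateFrom A₀) ν ∧
        ∀ B ∈ A₀, ν B = ENNReal.ofReal (μ B)) := by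
  let : MeasurableSpace Ω := MeasurableSpace.generateFrom A₀
  have hA : IsSetAlgebra A₀ :=
    ⟨by simpa using hcompl _ huniv, fun B hB ↦ hcompl B hB, fun B C hB hC ↦ hunion B hB C hC⟩
  have hμ_add : ∀ B ∈ A₀, ∀ C ∈ A₀, Disjoint B C → μ (B ∪ C) = μ B + μ C :=
    fun B hB C hC hBC ↦ tendsto_nhds_unique (hconv _ (hunion B hB C hC)) <|
      ((hconv B hB).add (hconv C hC)).congr fun i ↦ (hadd i B hB C hC hBC).symm
  have hμ_nonneg : ∀ B ∈ A₀, 0 ≤ μ B :=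
    fun B hB ↦ ge_of_tendsto' (hconv B hB) fun i ↦ (hrange i B hB).1
  have hμ_tendsto : ∀ B : ℕ → Set Ω, (∀ k, B k ∈ A₀) → Antitone B → (⋂ k, B k) = ∅ →
      Tendsto (fun k ↦ μ (B k)) atTop (𝓝 0) :=
    fun B hB hanti hempty ↦ (hLEC B hB hanti hempty).congr fun k ↦ (hconv _ (hB k)).limsup_eq
  have hμ_univ : μ Set.univ = 1 :=
    tendsto_nhds_unique (hconv _ huniv) (by simp only [htotal, tendsto_const_nhds])
  obtain ⟨ν, hν⟩ := hA.isSetRing.exists_measure_eq_ofReal rfl hμ_nonneg hμ_add hμ_tendsto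
  have hν_prob : IsProbabilityMeasure ν := ⟨by rw [hν _ huniv, hμ_univ, ENNReal.ofReal_one]⟩
  refine ⟨hμ_add, hμ_tendsto, ν, ⟨hν_prob, hν⟩, fun ν' ⟨_, hν'⟩ ↦ ?_⟩
  exact ext_of_generate_finite A₀ rfl hA.isSetRing.isSetSemiring.isPiSystem
    (fun B hB ↦ by rw [hν' B hB, hν B hB]) (by rw [hν' _ huniv, hν _ huniv])
end
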